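/- arXiv:2207.05918 — 6 statements merged into one kernel-verified Lean document; each statement's English description precedes it below -/
import Mathlib

section
/- Let A be an n×n real matrix and b a vector in ℝⁿ. A vector x ∈ ℝⁿ satisfies the absolute value equation Ax − |x| = b (where |x| denotes the componentwise absolute value) if and only if x satisfies the generalized linear complementarity conditions: (A+I)x − b ≥ 0 componentwise, (A−I)x − b ≥ 0 componentwise, and ⟨(A+I)x − b, (A−I)x − b⟩ = 0. -/
/-! Put `a = (Ax - b)ᵢ` and `t = xᵢ`, so that `(A ± I)x - b` has coordinates `a ± t`. Then
`a = |t|` says exactly that `a + t` and `a - t` are nonnegative with product `a² - t² = 0`, and a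
sum of nonnegative products vanishes only if every product does. -/

theorem eq_abs_iff_complementarity {α : Type*} [CommRing α] [LinearOrder α]
    [IsStrictOrderedRing α] {a t : α} :
    a = |t| ↔ 0 ≤ a + t ∧ 0 ≤ a - t ∧ (a + t) * (a - t) = 0 := by
  constructor
  · rintro rfl
    refine ⟨by linarith [neg_abs_le t], by linarith [le_abs_self t], ?_⟩
    rw [← sq_sub_sq, sq_abs, sub_self]
  · rintro ⟨hplus, hminus, hprod⟩
    rcases mul_eq_zero.mp hprod with h | h
    · rw [abs_of_nonpos (by linarith)]
      linarith
    · rw [abs_of_nonneg (by linarith)]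
      linarith

theorem complementarity_iff_forall {ι α : Type*} [Fintype ι] [Semiring α] [PartialOrder α]
    [IsOrderedRing α] (u v : ι → α) :
    ((∀ i, 0 ≤ u i) ∧ (∀ i, 0 ≤ v i) ∧ ∑ i, u i * v i = 0) ↔
      ∀ i, 0 ≤ u i ∧ 0 ≤ v i ∧ u i * v i = 0 := by
  constructor
  · rintro ⟨hu, hv, hsum⟩ i
    exact ⟨hu i, hv i, (Finset.sum_eq_zero_iff_of_nonneg fun j _ => mul_nonneg (hu j) (hv j)).mp
      hsum i (Finset.mem_univ i)⟩
  · intro h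
    exact ⟨fun i => (h i).1, fun i => (h i).2.1, Finset.sum_eq_zero fun i _ => (h i).2.2⟩

/-- For an `n × n` real matrix `A` and `b : ℝⁿ`, a vector `x` satisfies the
absolute value equation `A x - |x| = b` (componentwise absolute value) iff it satisfies the
generalized linear complementarity conditions `(A + I) x - b ≥ 0`, `(A - I) x - b ≥ 0`
(componentwise) and `⟨(A + I) x - b, (A - I) x - b⟩ = 0` (Euclidean inner product). -/
theorem ave_iff_generalized_lcp (n : ℕ) (A : Matrix (Fin n) (Fin n) ℝ) (b x : Fin n → ℝ) :
    (A.mulVec x - (fun i => |x i|) = b) ↔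
      ((∀ i, 0 ≤ ((A + 1).mulVec x - b) i) ∧
        (∀ i, 0 ≤ ((A - 1).mulVec x - b) i) ∧
        ∑ i, ((A + 1).mulVec x - b) i * ((A - 1).mulVec x - b) i = 0) := by
  have hplus : (A + 1).mulVec x - b = (A.mulVec x - b) + x := by
    rw [Matrix.add_mulVec, Matrix.one_mulVec]
    abel
  have hminus : (A - 1).mulVec x - b = (A.mulVec x - b) - x := by
    rw [Matrix.sub_mulVec, Matrix.one_mulVec]
    abel
  have ave_iff : A.mulVec x - (fun i => |x i|) = b ↔ ∀ i, (A.mulVec x - b) i = |x i| := by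
    simp only [funext_iff, Pi.sub_apply, Pi.add_apply, sub_eq_iff_eq_add, add_comm]
  rw [hplus, hminus, complementarity_iff_forall, ave_iff]
  simp only [eq_abs_iff_complementarity, Pi.add_apply, Pi.sub_apply]
end

section
/- Let A be an n×n real matrix and b a vector in ℝⁿ, and let S = {x ∈ ℝⁿ : (A+I)x − b ≥ 0 and (A−I)x − b ≥ 0} be the feasible set of the associated bilinear program. Then for every x ∈ S the bilinear objective ⟨(A+I)x − b, (A−I)x − b⟩ is nonnegative, and a feasible point x ∈ S attains objective value 0 if and only if x solves the absolute value equation Ax − |x| = b. -/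
/-!
Write `y = A x - b`. Then `(A + I) x - b = y + x` and `(A - I) x - b = y - x`, so feasibility says
`|x| ≤ y` componentwise and the objective is `∑ (yᵢ² - xᵢ²) ≥ 0`. A sum of nonnegative terms
vanishes iff every term does, and under `|xᵢ| ≤ yᵢ` the term `(yᵢ + xᵢ)(yᵢ - xᵢ)` vanishes iff
`yᵢ = |xᵢ|`, which is the absolute value equation.
-/

open Matrix

section Scalar

variable {α : Type*} [CommRing α] [LinearOrder α] [IsStrictOrderedRing α] {x y : α}

lemma add_mul_sub_eq_zero_iff_eq_abs (h₁ : 0 ≤ y + x) (h₂ : 0 ≤ y - x) :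
    (y + x) * (y - x) = 0 ↔ y = |x| := by
  constructor
  · intro h
    rcases mul_eq_zero.mp h with h | h
    · rw [abs_of_nonpos (by linarith)]
      linarith
    · rw [abs_of_nonneg (by linarith)]
      linarith
  · rintro rfl
    rcases abs_cases x with ⟨hx, -⟩ | ⟨hx, -⟩ <;> rw [hx] <;> simp

lemma sum_add_mul_sub_eq_zero_iff_eq_abs {ι : Type*} [Fintype ι] {x y : ι → α}
    (h₁ : ∀ i, 0 ≤ y i + x i) (h₂ : ∀ i, 0 ≤ y i - x i) :
    ∑ i, (y i + x i) * (y i - x i) = 0 ↔ y = fun i => |x i| := by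
  rw [Finset.sum_eq_zero_iff_of_nonneg fun i _ => mul_nonneg (h₁ i) (h₂ i), funext_iff]
  simp only [Finset.mem_univ, true_implies, add_mul_sub_eq_zero_iff_eq_abs (h₁ _) (h₂ _)]

end Scalar

section MulVec

variable {α ι : Type*} [Ring α] [Fintype ι] [DecidableEq ι]
  (A : Matrix ι ι α) (x b : ι → α)

lemma add_one_mulVec_sub : (A + 1) *ᵥ x - b = (A *ᵥ x - b) + x := by
  rw [add_mulVec, one_mulVec]
  abel

lemma sub_one_mulVec_sub : (A - 1) *ᵥ x - b = (A *ᵥ x - b) - x := by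
  rw [sub_mulVec, one_mulVec]
  abel

end MulVec

/-- For an `n × n` real matrix `A` and `b : ℝⁿ`, on the feasible set
`S = {x | (A+I)x - b ≥ 0 ∧ (A-I)x - b ≥ 0}` of the associated bilinear program, the bilinear
objective `⟨(A+I)x - b, (A-I)x - b⟩` is nonnegative, and a feasible `x` attains the value `0`
iff `x` solves the absolute value equation `A x - |x| = b`. -/
theorem bilinear_program_nonneg_and_zero_iff_ave (n : ℕ)
    (A : Matrix (Fin n) (Fin n) ℝ) (b : Fin n → ℝ) (S : Set (Fin n → ℝ))
    (hS : S = {x | (∀ i, 0 ≤ ((A + 1).mulVec x - b) i) ∧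
      (∀ i, 0 ≤ ((A - 1).mulVec x - b) i)}) :
    ∀ x ∈ S,
      0 ≤ ∑ i, ((A + 1).mulVec x - b) i * ((A - 1).mulVec x - b) i ∧
      ((∑ i, ((A + 1).mulVec x - b) i * ((A - 1).mulVec x - b) i = 0) ↔
        A.mulVec x - (fun i => |x i|) = b) := by
  subst hS
  rintro x ⟨h₁, h₂⟩
  rw [add_one_mulVec_sub] at h₁ ⊢
  rw [sub_one_mulVec_sub] at h₂ ⊢
  set y := A *ᵥ x - b
  simp only [Pi.add_apply, Pi.sub_apply] at h₁ h₂ ⊢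
  refine ⟨Finset.sum_nonneg fun i _ => mul_nonneg (h₁ i) (h₂ i), ?_⟩
  rw [sum_add_mul_sub_eq_zero_iff_eq_abs h₁ h₂, sub_eq_iff_comm]
end

section
/- Let Ω be a nonempty set, and for each ω ∈ Ω let A(ω) be an n×n real matrix and b(ω) a vector in ℝⁿ. A vector x ∈ ℝⁿ satisfies the stochastic absolute value equations A(ω)x − |x| = b(ω) for every ω ∈ Ω if and only if for every ω ∈ Ω it satisfies (A(ω)+I)x − b(ω) ≥ 0, (A(ω)−I)x − b(ω) ≥ 0, and ⟨(A(ω)+I)x − b(ω), (A(ω)−I)x − b(ω)⟩ = 0. -/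
/-!
Componentwise, `a - |t| = c` says that `u = a - c` dominates both `t` and `-t` with equality in
one of them, i.e. `u + t ≥ 0`, `u - t ≥ 0` and `(u + t)(u - t) = 0`; and a sum of nonnegative
products vanishes iff every product does.
-/

open Matrix

theorem sub_abs_eq_iff_complementarity {α : Type*} [CommRing α] [LinearOrder α]
    [IsStrictOrderedRing α] {a c t : α} :
    a - |t| = c ↔ 0 ≤ a + t - c ∧ 0 ≤ a - t - c ∧ (a + t - c) * (a - t - c) = 0 := by
  constructor
  · rintro rfl
    refine ⟨by linarith [neg_abs_le t], by linarith [le_abs_self t], ?_⟩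
    rcases abs_choice t with h | h <;> rw [h] <;> ring
  · rintro ⟨hplus, hminus, hprod⟩
    rcases mul_eq_zero.mp hprod with h | h
    · rw [abs_of_nonpos (by linarith)]; linarith
    · rw [abs_of_nonneg (by linarith)]; linarith

theorem forall_nonneg_and_sum_mul_eq_zero_iff {ι α : Type*} [Fintype ι] [Semiring α]
    [PartialOrder α] [IsOrderedRing α] {p q : ι → α} :
    ((∀ i, 0 ≤ p i) ∧ (∀ i, 0 ≤ q i) ∧ ∑ i, p i * q i = 0) ↔
      ∀ i, 0 ≤ p i ∧ 0 ≤ q i ∧ p i * q i = 0 := by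
  constructor
  · rintro ⟨hp, hq, hsum⟩ i
    exact ⟨hp i, hq i, (Finset.sum_eq_zero_iff_of_nonneg fun j _ => mul_nonneg (hp j) (hq j)).mp
      hsum i (Finset.mem_univ i)⟩
  · intro h
    exact ⟨fun i => (h i).1, fun i => (h i).2.1, Finset.sum_eq_zero fun i _ => (h i).2.2⟩

theorem save_iff_stochastic_generalized_lcp_general (n : ℕ) (Ω : Type*)
    (A : Ω → Matrix (Fin n) (Fin n) ℝ) (b : Ω → Fin n → ℝ) (x : Fin n → ℝ) :
    (∀ ω : Ω, (A ω).mulVec x - (fun i => |x i|) = b ω) ↔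
      (∀ ω : Ω,
        (∀ i, 0 ≤ ((A ω + 1).mulVec x - b ω) i) ∧
        (∀ i, 0 ≤ ((A ω - 1).mulVec x - b ω) i) ∧
        ∑ i, ((A ω + 1).mulVec x - b ω) i * ((A ω - 1).mulVec x - b ω) i = 0) := by
  refine forall_congr' fun ω => ?_
  rw [funext_iff, forall_nonneg_and_sum_mul_eq_zero_iff]
  refine forall_congr' fun i => ?_
  simp only [add_mulVec, sub_mulVec, one_mulVec, Pi.add_apply, Pi.sub_apply]
  exact sub_abs_eq_iff_complementarity

/-- Let `Ω` be a nonempty set and for each `ω ∈ Ω` let `A ω` be an `n × n`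
real matrix and `b ω ∈ ℝⁿ`. A vector `x` satisfies the stochastic absolute value equations
`A(ω) x - |x| = b(ω)` for every `ω` iff for every `ω` it satisfies
`(A(ω)+I)x - b(ω) ≥ 0`, `(A(ω)-I)x - b(ω) ≥ 0` and
`⟨(A(ω)+I)x - b(ω), (A(ω)-I)x - b(ω)⟩ = 0`. -/
theorem save_iff_stochastic_generalized_lcp (n : ℕ) (Ω : Type*) [Nonempty Ω]
    (A : Ω → Matrix (Fin n) (Fin n) ℝ) (b : Ω → Fin n → ℝ) (x : Fin n → ℝ) :
    (∀ ω : Ω, (A ω).mulVec x - (fun i => |x i|) = b ω) ↔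
      (∀ ω : Ω,
        (∀ i, 0 ≤ ((A ω + 1).mulVec x - b ω) i) ∧
        (∀ i, 0 ≤ ((A ω - 1).mulVec x - b ω) i) ∧
        ∑ i, ((A ω + 1).mulVec x - b ω) i * ((A ω - 1).mulVec x - b ω) i = 0) :=
  save_iff_stochastic_generalized_lcp_general n Ω A b x
end

section
/- Let A be an n×n real matrix and b ∈ ℝⁿ. Suppose that A − D is nonsingular for every n×n diagonal matrix D whose diagonal entries all lie in {−1, +1}. Then the map g(x) = Ax − |x| − b is coercive in norm: for every sequence (x_k) in ℝⁿ with ‖x_k‖ → ∞ one has ‖A x_k − |x_k| − b‖ → ∞; equivalently, for every γ > 0 the set {x ∈ ℝⁿ : ‖Ax − |x| − b‖ ≤ γ} is bounded. -/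
/-!
The residual splits as `g = h - b` with `h x = A x - |x|`. The map `h` is continuous and
positively homogeneous, and on each orthant it is the linear map `A - D`, so the nonsingularity
of every `A - D` says that `h` vanishes only at `0`. Hence `‖h‖` has a positive minimum `c` on
the unit sphere, homogeneity gives `c ‖x‖ ≤ ‖h x‖` everywhere, and so
`‖g x‖ ≥ c ‖x‖ - ‖b‖`.
-/

open Filter Matrix Bornology

theorem exists_pos_mul_norm_le_norm_of_homogeneous {E F : Type*} [NormedAddCommGroup E]
    [NormedSpace ℝ E] [FiniteDimensional ℝ E] [NormedAddCommGroup F] [NormedSpace ℝ F]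
    {h : E → F} (hcont : Continuous h) (hhom : ∀ t : ℝ, 0 ≤ t → ∀ x, h (t • x) = t • h x)
    (hzero : ∀ x, h x = 0 → x = 0) : ∃ c > 0, ∀ x, c * ‖x‖ ≤ ‖h x‖ := by
  rcases subsingleton_or_nontrivial E with _ | _
  · exact ⟨1, one_pos, fun x => by simp [Subsingleton.elim x 0]⟩
  obtain ⟨z, hz, hmin⟩ := (isCompact_sphere (0 : E) 1).exists_isMinOn
    (NormedSpace.sphere_nonempty.2 zero_le_one) hcont.norm.continuousOn
  have hz0 : z ≠ 0 := ne_zero_of_mem_unit_sphere ⟨z, hz⟩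
  refine ⟨‖h z‖, norm_pos_iff.2 fun h0 => hz0 (hzero z h0), fun x => ?_⟩
  rcases eq_or_ne x 0 with rfl | hx
  · simp
  have hx' : 0 < ‖x‖ := norm_pos_iff.2 hx
  have hu : ‖x‖⁻¹ • x ∈ Metric.sphere (0 : E) 1 := by
    simp [norm_smul, hx'.ne']
  calc ‖h z‖ * ‖x‖ ≤ ‖h (‖x‖⁻¹ • x)‖ * ‖x‖ := by gcongr; exact hmin hu
    _ = ‖h x‖ := by
      rw [hhom _ (inv_nonneg.2 hx'.le), norm_smul, Real.norm_of_nonneg (inv_nonneg.2 hx'.le)]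
      field_simp

theorem tendsto_norm_sub_cobounded_atTop {E F : Type*} [NormedAddCommGroup E]
    [NormedAddCommGroup F] {h : E → F} {c : ℝ} (hc : 0 < c) (hh : ∀ x, c * ‖x‖ ≤ ‖h x‖) (b : F) :
    Tendsto (fun x => ‖h x - b‖) (cobounded E) atTop := by
  refine tendsto_atTop_mono (fun x => ?_)
    ((tendsto_norm_cobounded_atTop.const_mul_atTop hc).atTop_add (tendsto_const_nhds (x := -‖b‖)))
  linarith [hh x, norm_sub_norm_le (h x) b]

section AbsoluteValueEquation

variable {ι : Type*} [Fintype ι] [DecidableEq ι]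

/-- The left-hand side of the absolute value equation `A x - |x| = b`. -/
noncomputable def aveMap (A : Matrix ι ι ℝ) (x : EuclideanSpace ℝ ι) : EuclideanSpace ℝ ι :=
  toEuclideanLin A x - (WithLp.equiv 2 (ι → ℝ)).symm (fun i => |x i|)

theorem ofLp_aveMap_of_abs_eq (A : Matrix ι ι ℝ) {x : EuclideanSpace ℝ ι} {s : ι → ℝ}
    (hs : ∀ i, |x i| = s i * x i) :
    WithLp.ofLp (aveMap A x) = (A - diagonal s) *ᵥ WithLp.ofLp x := by
  ext i
  simp [aveMap, sub_mulVec, mulVec_diagonal, hs]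

theorem aveMap_smul_of_nonneg (A : Matrix ι ι ℝ) {t : ℝ} (ht : 0 ≤ t) (x : EuclideanSpace ℝ ι) :
    aveMap A (t • x) = t • aveMap A x := by
  ext i
  simp [aveMap, abs_mul, abs_of_nonneg ht, mul_sub]

theorem eq_zero_of_aveMap_eq_zero {A : Matrix ι ι ℝ}
    (hA : ∀ s : ι → ℝ, (∀ i, s i = 1 ∨ s i = -1) → IsUnit (A - diagonal s))
    {x : EuclideanSpace ℝ ι} (hx : aveMap A x = 0) : x = 0 := by
  set s : ι → ℝ := fun i => if 0 ≤ x i then 1 else -1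
  have hs : ∀ i, s i = 1 ∨ s i = -1 := fun i => by by_cases h : 0 ≤ x i <;> simp [s, h]
  have habs : ∀ i, |x i| = s i * x i := fun i => by
    by_cases h : 0 ≤ x i
    · simp [s, h, abs_of_nonneg h]
    · simp [s, h, abs_of_neg (not_le.1 h)]
  have hker : (A - diagonal s) *ᵥ WithLp.ofLp x = (A - diagonal s) *ᵥ 0 := by
    rw [← ofLp_aveMap_of_abs_eq A habs, hx, mulVec_zero, WithLp.ofLp_zero]
  exact WithLp.ofLp_injective 2 (mulVec_injective_of_isUnit (hA s hs) hker)

theorem continuous_aveMap (A : Matrix ι ι ℝ) : Continuous (aveMap A) :=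
  (LinearMap.continuous_of_finiteDimensional _).sub
    ((PiLp.continuous_toLp 2 _).comp (by fun_prop))

end AbsoluteValueEquation

/-- If `A - D` is nonsingular for every diagonal matrix `D` with diagonal
entries in `{-1, +1}`, then `g(x) = A x - |x| - b` is norm-coercive: `‖x_k‖ → ∞` implies
`‖g(x_k)‖ → ∞`; equivalently, every level set `{x : ‖A x - |x| - b‖ ≤ γ}` (γ > 0) is bounded.
Norms are Euclidean. -/
theorem ave_residual_coercive (n : ℕ) (A : Matrix (Fin n) (Fin n) ℝ)
    (b : EuclideanSpace ℝ (Fin n))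
    (hA : ∀ s : Fin n → ℝ, (∀ i, s i = 1 ∨ s i = -1) → IsUnit (A - Matrix.diagonal s))
    (g : EuclideanSpace ℝ (Fin n) → EuclideanSpace ℝ (Fin n))
    (hg : g = fun x => Matrix.toEuclideanLin A x -
      (WithLp.equiv 2 (Fin n → ℝ)).symm (fun i => |x i|) - b) :
    (∀ x : ℕ → EuclideanSpace ℝ (Fin n),
      Tendsto (fun k => ‖x k‖) atTop atTop → Tendsto (fun k => ‖g (x k)‖) atTop atTop) ∧
    (∀ γ : ℝ, 0 < γ → Bornology.IsBounded {x : EuclideanSpace ℝ (Fin n) | ‖g x‖ ≤ γ}) := by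
  obtain ⟨c, hc, hlower⟩ := exists_pos_mul_norm_le_norm_of_homogeneous (continuous_aveMap A)
    (fun _ ht => aveMap_smul_of_nonneg A ht) (fun _ => eq_zero_of_aveMap_eq_zero hA)
  have hcoercive : Tendsto (fun x => ‖g x‖) (cobounded _) atTop := by
    subst hg
    exact tendsto_norm_sub_cobounded_atTop hc hlower b
  refine ⟨fun x hx => hcoercive.comp (tendsto_norm_atTop_iff_cobounded.1 hx), fun γ _ => ?_⟩
  exact isBounded_def.2 ((hcoercive.eventually_gt_atTop γ).mono fun _ => not_le.2)
end

section
/- Let f : ℝⁿ → ℝ be continuously differentiable and bounded below, and let δ, ρ ∈ (0,1). Let (x_k) be a sequence in ℝⁿ generated by the gradient method with Armijo backtracking: d_k = −∇f(x_k), α_k = max{ρ^j : j = 0,1,2,… and f(x_k + ρ^j d_k) − f(x_k) ≤ δ ρ^j ⟨∇f(x_k), d_k⟩}, and x_{k+1} = x_k + α_k d_k, where each x_k satisfies ∇f(x_k) ≠ 0 so the step is defined. If the sequence (x_k) converges to a point x*, then ∇f(x*) = 0. -/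
/-!
Suppose `∇f x* ≠ 0`. Since `f (x k) → f x*`, the Armijo decrease
`δ α_k ‖∇f (x k)‖² ≤ f (x k) - f (x (k+1))` forces `α_k → 0`. So eventually `α_k < 1`, the step
`α_k / ρ` was rejected, and the mean value theorem on the rejected segment yields points
`ξ_k → x*` with `⟪∇f ξ_k, ∇f (x k)⟫ < δ ‖∇f (x k)‖²`. In the limit `‖∇f x*‖² ≤ δ ‖∇f x*‖²`,
which is impossible for `δ < 1`.
-/

open Filter
open scoped RealInnerProductSpace Topology

/-- `a / ρ` is the step that backtracking tried just before accepting `a`. -/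
theorem not_pred_div_of_pow_le {ρ a : ℝ} {P : ℝ → Prop} (hρ0 : 0 < ρ) (hρ1 : ρ < 1)
    (ha : ∃ j : ℕ, a = ρ ^ j) (hmax : ∀ j : ℕ, P (ρ ^ j) → ρ ^ j ≤ a) (ha1 : a < 1) :
    ¬ P (a / ρ) := by
  obtain ⟨_ | j, rfl⟩ := ha
  · simp at ha1
  · intro hP
    rw [pow_succ, mul_div_cancel_right₀ _ hρ0.ne'] at hP
    have := hmax j hP
    rw [pow_succ] at this
    nlinarith [pow_pos hρ0 j]

theorem tendsto_zero_of_mul_le_of_tendsto {a b c : ℕ → ℝ} {β : ℝ} (ha : ∀ k, 0 ≤ a k)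
    (hle : ∀ k, a k * b k ≤ c k) (hc : Tendsto c atTop (𝓝 0)) (hb : Tendsto b atTop (𝓝 β))
    (hβ : 0 < β) : Tendsto a atTop (𝓝 0) := by
  have hquot : Tendsto (fun k => c k / b k) atTop (𝓝 0) := by
    have := hc.div hb hβ.ne'
    rwa [zero_div] at this
  refine squeeze_zero' (Eventually.of_forall ha) ?_ hquot
  filter_upwards [hb.eventually_const_lt hβ] with k hk
  rw [le_div_iff₀ hk]
  exact hle k

section Armijo

variable {E : Type*} [NormedAddCommGroup E] [InnerProductSpace ℝ E] [CompleteSpace E]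
  {f : E → ℝ}

theorem ContDiff.continuous_gradient {n : WithTop ℕ∞} (hf : ContDiff ℝ n f) (hn : n ≠ 0) :
    Continuous (gradient f) :=
  (InnerProductSpace.toDual ℝ E).symm.continuous.comp (hf.continuous_fderiv hn)

theorem exists_mem_segment_sub_eq_inner_gradient (hf : Differentiable ℝ f) (x y : E) :
    ∃ z ∈ segment ℝ x y, f y - f x = ⟪gradient f z, y - x⟫ := by
  obtain ⟨z, hz, hmvt⟩ := domain_mvt (fun z _ => (hf z).hasFDerivAt.hasFDerivWithinAt)
    convex_univ (Set.mem_univ x) (Set.mem_univ y)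
  exact ⟨z, hz, hmvt.trans (inner_gradient_left).symm⟩

def ArmijoCondition (f : E → ℝ) (δ : ℝ) (x d : E) (t : ℝ) : Prop :=
  f (x + t • d) - f x ≤ δ * t * ⟪gradient f x, d⟫

theorem exists_dist_le_inner_gradient_gt_of_not_armijoCondition (hf : Differentiable ℝ f)
    {δ t : ℝ} {x d : E} (ht : 0 ≤ t) (hfail : ¬ ArmijoCondition f δ x d t) :
    ∃ y, dist y x ≤ t * ‖d‖ ∧ δ * ⟪gradient f x, d⟫ < ⟪gradient f y, d⟫ := by
  obtain ⟨y, hy, hmvt⟩ := exists_mem_segment_sub_eq_inner_gradient hf x (x + t • d)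
  refine ⟨y, ?_, ?_⟩
  · have := segment_subset_closedBall_left x (x + t • d) hy
    rwa [Metric.mem_closedBall, dist_self_add_right, norm_smul, Real.norm_of_nonneg ht] at this
  · rw [ArmijoCondition, not_le, hmvt, add_sub_cancel_left, inner_smul_right, mul_assoc,
      mul_left_comm] at hfail
    exact lt_of_mul_lt_mul_left hfail ht

theorem ArmijoCondition.mul_norm_sq_le {δ t : ℝ} {x : E}
    (h : ArmijoCondition f δ x (-gradient f x) t) :
    δ * t * ‖gradient f x‖ ^ 2 ≤ f x - f (x + t • -gradient f x) := by
  rw [ArmijoCondition, inner_neg_right, real_inner_self_eq_norm_sq] at h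
  linarith

theorem tendsto_stepsize_zero_of_armijoCondition (hf : Continuous f)
    (hg : Continuous (gradient f)) {δ : ℝ} (hδ : 0 < δ) {x : ℕ → E} {α : ℕ → ℝ} {xstar : E}
    (hα : ∀ k, 0 ≤ α k) (harm : ∀ k, ArmijoCondition f δ (x k) (-gradient f (x k)) (α k))
    (hstep : ∀ k, x (k + 1) = x k + α k • -gradient f (x k))
    (hconv : Tendsto x atTop (𝓝 xstar)) (hne : gradient f xstar ≠ 0) :
    Tendsto α atTop (𝓝 0) := by
  have hfx : Tendsto (fun k => f (x k)) atTop (𝓝 (f xstar)) := (hf.tendsto xstar).comp hconv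
  have hdecrease : Tendsto (fun k => f (x k) - f (x (k + 1))) atTop (𝓝 0) := by
    simpa using hfx.sub (hfx.comp (tendsto_add_atTop_nat 1))
  have hslope : Tendsto (fun k => δ * ‖gradient f (x k)‖ ^ 2) atTop
      (𝓝 (δ * ‖gradient f xstar‖ ^ 2)) :=
    tendsto_const_nhds.mul (((hg.tendsto xstar).comp hconv).norm.pow 2)
  refine tendsto_zero_of_mul_le_of_tendsto hα (fun k => ?_) hdecrease hslope (by positivity)
  rw [hstep k]
  linarith [(harm k).mul_norm_sq_le]

theorem norm_sq_gradient_le_of_not_armijoCondition (hf : Differentiable ℝ f)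
    (hg : Continuous (gradient f)) {δ : ℝ} {x : ℕ → E} {t : ℕ → ℝ} {xstar : E}
    (hfail : ∀ᶠ k in atTop, 0 ≤ t k ∧ ¬ ArmijoCondition f δ (x k) (-gradient f (x k)) (t k))
    (ht : Tendsto t atTop (𝓝 0)) (hconv : Tendsto x atTop (𝓝 xstar)) :
    ‖gradient f xstar‖ ^ 2 ≤ δ * ‖gradient f xstar‖ ^ 2 := by
  have hnear : ∀ k, 0 ≤ t k ∧ ¬ ArmijoCondition f δ (x k) (-gradient f (x k)) (t k) →
      ∃ y, dist (x k) y ≤ t k * ‖gradient f (x k)‖ ∧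
        ⟪gradient f y, gradient f (x k)⟫ < δ * ‖gradient f (x k)‖ ^ 2 := by
    rintro k ⟨ht0, hk⟩
    obtain ⟨y, hy, hslope⟩ := exists_dist_le_inner_gradient_gt_of_not_armijoCondition hf ht0 hk
    simp only [norm_neg, inner_neg_right, real_inner_self_eq_norm_sq] at hy hslope
    exact ⟨y, dist_comm y (x k) ▸ hy, by linarith⟩
  choose! ξ hξ_dist hξ_slope using hnear
  have hgx : Tendsto (fun k => gradient f (x k)) atTop (𝓝 (gradient f xstar)) :=
    (hg.tendsto xstar).comp hconv
  have hξ : Tendsto ξ atTop (𝓝 xstar) :=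
    hconv.congr_dist (squeeze_zero' (Eventually.of_forall fun k => dist_nonneg)
      (hfail.mono hξ_dist) (by simpa using ht.mul hgx.norm))
  have hlim := le_of_tendsto_of_tendsto (((hg.tendsto xstar).comp hξ).inner hgx)
    (tendsto_const_nhds.mul (hgx.norm.pow 2)) (hfail.mono fun k hk => (hξ_slope k hk).le)
  rwa [real_inner_self_eq_norm_sq] at hlim

end Armijo

theorem gradient_method_armijo_stationary_limit_general (n : ℕ)
    (f : EuclideanSpace ℝ (Fin n) → ℝ) (hf : ContDiff ℝ 1 f)
    (δ ρ : ℝ) (hδ : δ ∈ Set.Ioo (0:ℝ) 1) (hρ : ρ ∈ Set.Ioo (0:ℝ) 1)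
    (x : ℕ → EuclideanSpace ℝ (Fin n)) (α : ℕ → ℝ)
    (hα_mem : ∀ k, ∃ j : ℕ, α k = ρ ^ j ∧
      f (x k + ρ ^ j • (-(gradient f (x k)))) - f (x k) ≤
        δ * ρ ^ j * ⟪gradient f (x k), -(gradient f (x k))⟫)
    (hα_max : ∀ k, ∀ j : ℕ,
      (f (x k + ρ ^ j • (-(gradient f (x k)))) - f (x k) ≤
        δ * ρ ^ j * ⟪gradient f (x k), -(gradient f (x k))⟫) → ρ ^ j ≤ α k)
    (hstep : ∀ k, x (k + 1) = x k + α k • (-(gradient f (x k))))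
    (xstar : EuclideanSpace ℝ (Fin n)) (hconv : Tendsto x atTop (nhds xstar)) :
    gradient f xstar = 0 := by
  obtain ⟨hδ0, hδ1⟩ := hδ
  obtain ⟨hρ0, hρ1⟩ := hρ
  have hg := hf.continuous_gradient one_ne_zero
  have hα_pos : ∀ k, 0 < α k := fun k => by
    obtain ⟨j, hj, -⟩ := hα_mem k
    rw [hj]; positivity
  have harm : ∀ k, ArmijoCondition f δ (x k) (-gradient f (x k)) (α k) := fun k => by
    obtain ⟨j, hj, h⟩ := hα_mem k
    rw [hj]; exact h
  by_contra hne
  have hα0 : Tendsto α atTop (𝓝 0) := tendsto_stepsize_zero_of_armijoCondition hf.continuous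
    hg hδ0 (fun k => (hα_pos k).le) harm hstep hconv hne
  have hfail : ∀ᶠ k in atTop,
      0 ≤ α k / ρ ∧ ¬ ArmijoCondition f δ (x k) (-gradient f (x k)) (α k / ρ) := by
    filter_upwards [hα0.eventually_lt_const one_pos] with k hk
    exact ⟨(div_pos (hα_pos k) hρ0).le,
      not_pred_div_of_pow_le hρ0 hρ1 ((hα_mem k).imp fun _ => And.left) (hα_max k) hk⟩
  have hle := norm_sq_gradient_le_of_not_armijoCondition hf.differentiable_one hg hfail
    (by simpa using hα0.div_const ρ) hconv
  exact (mul_lt_of_lt_one_left (by positivity) hδ1).not_ge hle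

/-- Let `f` be continuously differentiable and bounded below, and let
`(x_k)` be generated by the gradient method with Armijo backtracking:
`d_k = -∇f(x_k)`, `α_k = max{ρʲ : f(x_k + ρʲ d_k) - f(x_k) ≤ δ ρʲ ⟨∇f(x_k), d_k⟩}`,
`x_{k+1} = x_k + α_k d_k`, with `∇f(x_k) ≠ 0` for all `k`.  If `x_k → x*`, then `∇f(x*) = 0`. -/
theorem gradient_method_armijo_stationary_limit (n : ℕ)
    (f : EuclideanSpace ℝ (Fin n) → ℝ) (hf : ContDiff ℝ 1 f)
    (hbdd : BddBelow (Set.range f))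
    (δ ρ : ℝ) (hδ : δ ∈ Set.Ioo (0:ℝ) 1) (hρ : ρ ∈ Set.Ioo (0:ℝ) 1)
    (x : ℕ → EuclideanSpace ℝ (Fin n)) (α : ℕ → ℝ)
    (hgrad_ne : ∀ k, gradient f (x k) ≠ 0)
    (hα_mem : ∀ k, ∃ j : ℕ, α k = ρ ^ j ∧
      f (x k + ρ ^ j • (-(gradient f (x k)))) - f (x k) ≤
        δ * ρ ^ j * ⟪gradient f (x k), -(gradient f (x k))⟫)
    (hα_max : ∀ k, ∀ j : ℕ,
      (f (x k + ρ ^ j • (-(gradient f (x k)))) - f (x k) ≤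
        δ * ρ ^ j * ⟪gradient f (x k), -(gradient f (x k))⟫) → ρ ^ j ≤ α k)
    (hstep : ∀ k, x (k + 1) = x k + α k • (-(gradient f (x k))))
    (xstar : EuclideanSpace ℝ (Fin n)) (hconv : Tendsto x atTop (nhds xstar)) :
    gradient f xstar = 0 :=
  gradient_method_armijo_stationary_limit_general n f hf δ ρ hδ hρ x α hα_mem hα_max hstep xstar
    hconv
end

section
/- Let f̃ : ℝⁿ × ℝ → ℝ be such that f̃(·, μ) is continuously differentiable in x for every μ > 0, and let σ, γ̄ ∈ (0,1) and μ₀ > 0. Let (x_k) in ℝⁿ and (μ_k) in ℝ be sequences with the smoothing update rule: μ_{k+1} = μ_k if ‖∇_x f̃(x_{k+1}, μ_k)‖ ≥ γ̄ μ_k, and μ_{k+1} = σ μ_k otherwise. Assume the inner iteration has the property that for every μ̄ > 0, if μ_k = μ̄ for all sufficiently large k then lim_{k→∞} ‖∇_x f̃(x_k, μ̄)‖ = 0. Then the index set K = {k : μ_{k+1} = σ μ_k} is infinite, μ_k → 0 as k → ∞, and along K one has lim ‖∇_x f̃(x_{k+1}, μ_k)‖ = 0 (for k ∈ K, k → ∞).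 -/
/-! The parameter either stays put or shrinks by the factor `σ`, so it stays positive and
decreases. If it were reduced only finitely often, it would be eventually constant at some
`c > 0`; the inner iteration then drives the gradient norm below `γ̄ c`, which forces a
reduction. Along the infinitely many reductions the limit `L` of `μ_k` satisfies `L = σ L`,
so `L = 0`, and at those steps the gradient norm lies below `γ̄ μ_k → 0`. -/

open Filter Topology

namespace SmoothingParameter

variable {μ : ℕ → ℝ} {σ : ℝ}

lemma pos_of_step (hσ : 0 < σ) (hμ0 : 0 < μ 0)
    (hstep : ∀ k, μ (k + 1) = μ k ∨ μ (k + 1) = σ * μ k) (k : ℕ) : 0 < μ k := by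
  induction k with
  | zero => exact hμ0
  | succ k ih =>
    rcases hstep k with h | h
    · rwa [h]
    · rw [h]; positivity

lemma antitone_of_step (hσ : σ ≤ 1) (hpos : ∀ k, 0 < μ k)
    (hstep : ∀ k, μ (k + 1) = μ k ∨ μ (k + 1) = σ * μ k) : Antitone μ := by
  refine antitone_nat_of_succ_le fun k => ?_
  rcases hstep k with h | h
  · exact h.le
  · rw [h]; exact mul_le_of_le_one_left (hpos k).le hσ

lemma eq_zero_of_tendsto_of_frequently_eq_mul {L : ℝ} (hσ : σ ≠ 1)
    (hμ : Tendsto μ atTop (𝓝 L)) (hK : ∃ᶠ k in atTop, μ (k + 1) = σ * μ k) : L = 0 := by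
  set F := atTop ⊓ 𝓟 {k | μ (k + 1) = σ * μ k}
  have : F.NeBot := frequently_iff_neBot.1 hK
  have hsucc : Tendsto (fun k => μ (k + 1)) F (𝓝 L) :=
    (hμ.comp (tendsto_add_atTop_nat 1)).mono_left inf_le_left
  have hmul : Tendsto (fun k => μ (k + 1)) F (𝓝 (σ * L)) :=
    ((hμ.mono_left inf_le_left).const_mul σ).congr'
      (eventually_inf_principal.2 (Eventually.of_forall fun _ hk => hk.symm))
  have hfix : L = σ * L := tendsto_nhds_unique hsucc hmul
  have : (1 - σ) * L = 0 := by linarith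
  exact (mul_eq_zero.1 this).resolve_left (sub_ne_zero.2 hσ.symm)

lemma tendsto_zero_of_step (hσ : σ < 1) (hpos : ∀ k, 0 < μ k)
    (hstep : ∀ k, μ (k + 1) = μ k ∨ μ (k + 1) = σ * μ k)
    (hK : ∃ᶠ k in atTop, μ (k + 1) = σ * μ k) : Tendsto μ atTop (𝓝 0) := by
  have hμ : Tendsto μ atTop (𝓝 (⨅ k, μ k)) :=
    tendsto_atTop_ciInf (antitone_of_step hσ.le hpos hstep) ⟨0, by
      rintro _ ⟨k, rfl⟩
      exact (hpos k).le⟩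
  rwa [eq_zero_of_tendsto_of_frequently_eq_mul hσ.ne hμ hK] at hμ

section UpdateRule

variable {r : ℝ → ℕ → ℝ} {γ : ℝ}
  (hupdate : ∀ k, (γ * μ k ≤ r (μ k) (k + 1) → μ (k + 1) = μ k) ∧
    (r (μ k) (k + 1) < γ * μ k → μ (k + 1) = σ * μ k))
include hupdate

lemma step_of_update (k : ℕ) : μ (k + 1) = μ k ∨ μ (k + 1) = σ * μ k := by
  rcases le_or_gt (γ * μ k) (r (μ k) (k + 1)) with h | h
  · exact Or.inl ((hupdate k).1 h)
  · exact Or.inr ((hupdate k).2 h)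

lemma lt_of_update_eq_mul (hσ : σ ≠ 1) (hpos : ∀ k, 0 < μ k) {k : ℕ}
    (hk : μ (k + 1) = σ * μ k) : r (μ k) (k + 1) < γ * μ k := by
  by_contra! h
  rw [(hupdate k).1 h] at hk
  exact hσ (mul_right_cancel₀ (hpos k).ne' (by rw [one_mul]; exact hk.symm))

lemma frequently_eq_mul_of_update (hγ : 0 < γ) (hpos : ∀ k, 0 < μ k)
    (hinner : ∀ c, 0 < c → (∀ᶠ k in atTop, μ k = c) → Tendsto (r c) atTop (𝓝 0)) :
    ∃ᶠ k in atTop, μ (k + 1) = σ * μ k := by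
  by_contra hK
  rw [not_frequently] at hK
  have hconst : EventuallyConst μ atTop := by
    obtain ⟨N, hN⟩ := eventually_atTop.1 hK
    exact eventuallyConst_atTop_nat.2
      ⟨N, fun k hk => (step_of_update hupdate k).resolve_right (hN k hk)⟩
  obtain ⟨c, hc⟩ := hconst.eventuallyEq_const
  have hc0 : 0 < c := by
    obtain ⟨k, hk⟩ := hc.exists
    exact (hpos k).trans_eq hk
  have hsmall : ∀ᶠ k in atTop, r c (k + 1) < γ * c :=
    (tendsto_add_atTop_nat 1).eventually
      ((hinner c hc0 hc).eventually (eventually_lt_nhds (mul_pos hγ hc0)))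
  obtain ⟨k, hk, hck, hrk⟩ := (hK.and (hc.and hsmall)).exists
  exact hk ((hupdate k).2 (by rwa [hck]))

lemma tendsto_residual_of_update (hσ : σ ≠ 1) (hpos : ∀ k, 0 < μ k)
    (hr : ∀ c k, 0 ≤ r c k) (hμ : Tendsto μ atTop (𝓝 0)) :
    Tendsto (fun k => r (μ k) (k + 1)) (atTop ⊓ 𝓟 {k | μ (k + 1) = σ * μ k}) (𝓝 0) := by
  have hbound : Tendsto (fun k => γ * μ k) (atTop ⊓ 𝓟 {k | μ (k + 1) = σ * μ k}) (𝓝 0) := by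
    simpa using (hμ.const_mul γ).mono_left inf_le_left
  refine squeeze_zero' (Eventually.of_forall fun k => hr _ _) ?_ hbound
  exact eventually_inf_principal.2
    (Eventually.of_forall fun k hk => (lt_of_update_eq_mul hupdate hσ hpos hk).le)

end UpdateRule

end SmoothingParameter

theorem smoothing_gradient_parameter_update_general (n : ℕ)
    (ftil : EuclideanSpace ℝ (Fin n) → ℝ → ℝ)
    (σ γbar : ℝ) (hσ : σ ∈ Set.Ioo (0:ℝ) 1) (hγ : γbar ∈ Set.Ioo (0:ℝ) 1)
    (μ : ℕ → ℝ) (x : ℕ → EuclideanSpace ℝ (Fin n)) (hμ0 : 0 < μ 0)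
    (hupdate : ∀ k : ℕ,
      (γbar * μ k ≤ ‖gradient (fun y => ftil y (μ k)) (x (k + 1))‖ → μ (k + 1) = μ k) ∧
      (‖gradient (fun y => ftil y (μ k)) (x (k + 1))‖ < γbar * μ k → μ (k + 1) = σ * μ k))
    (hinner : ∀ μbar : ℝ, 0 < μbar → (∀ᶠ k in atTop, μ k = μbar) →
      Tendsto (fun k => ‖gradient (fun y => ftil y μbar) (x k)‖) atTop (nhds 0)) :
    {k : ℕ | μ (k + 1) = σ * μ k}.Infinite ∧
    Tendsto μ atTop (nhds 0) ∧
    Tendsto (fun k => ‖gradient (fun y => ftil y (μ k)) (x (k + 1))‖)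
      (atTop ⊓ Filter.principal {k : ℕ | μ (k + 1) = σ * μ k}) (nhds 0) := by
  open SmoothingParameter in
  let r : ℝ → ℕ → ℝ := fun c k => ‖gradient (fun y => ftil y c) (x k)‖
  have hstep := step_of_update (r := r) hupdate
  have hpos := pos_of_step hσ.1 hμ0 hstep
  have hK := frequently_eq_mul_of_update (r := r) hupdate hγ.1 hpos hinner
  have hμ := tendsto_zero_of_step hσ.2 hpos hstep hK
  exact ⟨Nat.frequently_atTop_iff_infinite.1 hK, hμ,
    tendsto_residual_of_update (r := r) hupdate hσ.2.ne hpos (fun _ _ => norm_nonneg _) hμ⟩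

/-- Smoothing gradient method: with update rule `μ_{k+1} = μ_k` if
`‖∇_x f̃(x_{k+1}, μ_k)‖ ≥ γ̄ μ_k` and `μ_{k+1} = σ μ_k` otherwise, and assuming the inner
iteration drives the gradient to zero whenever `μ_k` is eventually constant at a positive
value, the set `K = {k : μ_{k+1} = σ μ_k}` is infinite, `μ_k → 0`, and
`‖∇_x f̃(x_{k+1}, μ_k)‖ → 0` along `K`. -/
theorem smoothing_gradient_parameter_update (n : ℕ)
    (ftil : EuclideanSpace ℝ (Fin n) → ℝ → ℝ)
    (hsmooth : ∀ μ : ℝ, 0 < μ → ContDiff ℝ 1 (fun y => ftil y μ))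
    (σ γbar : ℝ) (hσ : σ ∈ Set.Ioo (0:ℝ) 1) (hγ : γbar ∈ Set.Ioo (0:ℝ) 1)
    (μ : ℕ → ℝ) (x : ℕ → EuclideanSpace ℝ (Fin n)) (hμ0 : 0 < μ 0)
    (hupdate : ∀ k : ℕ,
      (γbar * μ k ≤ ‖gradient (fun y => ftil y (μ k)) (x (k + 1))‖ → μ (k + 1) = μ k) ∧
      (‖gradient (fun y => ftil y (μ k)) (x (k + 1))‖ < γbar * μ k → μ (k + 1) = σ * μ k))
    (hinner : ∀ μbar : ℝ, 0 < μbar → (∀ᶠ k in atTop, μ k = μbar) →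
      Tendsto (fun k => ‖gradient (fun y => ftil y μbar) (x k)‖) atTop (nhds 0)) :
    {k : ℕ | μ (k + 1) = σ * μ k}.Infinite ∧
    Tendsto μ atTop (nhds 0) ∧
    Tendsto (fun k => ‖gradient (fun y => ftil y (μ k)) (x (k + 1))‖)
      (atTop ⊓ Filter.principal {k : ℕ | μ (k + 1) = σ * μ k}) (nhds 0) :=
  smoothing_gradient_parameter_update_general n ftil σ γbar hσ hγ μ x hμ0 hupdate hinner
end
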